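/- Let Θ be a variety of algebras and H an algebra in Θ. The contravariant assignment F ↦ Hom(F, H), s ↦ (ν ↦ ν ∘ s) on the category of finitely generated free algebras of Θ is faithful (i.e., s₁ ≠ s₂ implies the induced maps on Hom-sets differ) if and only if H satisfies no nontrivial identities of Θ, i.e., Var(H) = Θ. -/
import Mathlib


/-- for the variety of Lie algebras over P: the contravariant assignment
F ↦ Hom(F,H), s ↦ (ν ↦ ν ∘ s) on finitely generated free Lie algebras is faithful if and
only if H separates distinct elements of every free algebra, i.e. Var(H) = Θ. -/
theorem hom_functor_faithful_iff_var_eq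
    (P : Type*) [Field P] (H : Type*) [LieRing H] [LieAlgebra P H] :
    (∀ (n m : ℕ)
        (s₁ s₂ : FreeLieAlgebra P (Fin m) →ₗ⁅P⁆ FreeLieAlgebra P (Fin n)),
        s₁ ≠ s₂ →
        (fun ν : FreeLieAlgebra P (Fin n) →ₗ⁅P⁆ H => ν.comp s₁) ≠
          (fun ν : FreeLieAlgebra P (Fin n) →ₗ⁅P⁆ H => ν.comp s₂)) ↔
    (∀ (n : ℕ) (w₁ w₂ : FreeLieAlgebra P (Fin n)), w₁ ≠ w₂ →
        ∃ ν : FreeLieAlgebra P (Fin n) →ₗ⁅P⁆ H, ν w₁ ≠ ν w₂) := by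
  constructor
  · intro hfaith n w₁ w₂ hw
    set s₁ : FreeLieAlgebra P (Fin 1) →ₗ⁅P⁆ FreeLieAlgebra P (Fin n) :=
      FreeLieAlgebra.lift P (fun _ => w₁) with hs₁
    set s₂ : FreeLieAlgebra P (Fin 1) →ₗ⁅P⁆ FreeLieAlgebra P (Fin n) :=
      FreeLieAlgebra.lift P (fun _ => w₂) with hs₂
    have hne : s₁ ≠ s₂ := by
      intro h
      apply hw
      have := congrArg (fun f : FreeLieAlgebra P (Fin 1) →ₗ⁅P⁆ FreeLieAlgebra P (Fin n) =>
        f (FreeLieAlgebra.of P 0)) h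
      simpa [hs₁, hs₂, FreeLieAlgebra.lift_of_apply] using this
    have := hfaith n 1 s₁ s₂ hne
    rw [Function.ne_iff] at this
    obtain ⟨ν, hν⟩ := this
    refine ⟨ν, fun h => hν ?_⟩
    apply LieHom.ext
    intro x
    simp only [LieHom.comp_apply]
    have key : ∀ y, ν (s₁ y) = ν (s₂ y) := by
      intro y
      have : ν.comp s₁ = ν.comp s₂ := by
        apply FreeLieAlgebra.hom_ext
        intro i
        simp [hs₁, hs₂, FreeLieAlgebra.lift_of_apply, h]
      exact congrArg (fun f : FreeLieAlgebra P (Fin 1) →ₗ⁅P⁆ H => f y) this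
    exact key x
  · intro hsep n m s₁ s₂ hne
    rw [Function.ne_iff]
    obtain ⟨x, hx⟩ := DFunLike.ne_iff.mp hne
    obtain ⟨ν, hν⟩ := hsep n (s₁ x) (s₂ x) hx
    exact ⟨ν, fun h => hν (congrArg (fun f : FreeLieAlgebra P (Fin m) →ₗ⁅P⁆ H => f x) h)⟩
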